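/- Let X ∈ ℝ^d with σ(X) > 0 and let γ ∈ ℝ^d. Then LN is Fréchet differentiable at X, its total derivative at X is the linear map δ ↦ (A − B)δ, and the entries of this Jacobian matrix are given explicitly by (A − B)_{ij} = γ_i · ((δ_{ij} − 1/d)/σ(X) − (X_i − μ(X))(X_j − μ(X))/(d σ(X)³)), where δ_{ij} is the Kronecker delta. -/

import Mathlib

open scoped BigOperators

noncomputable section

/-- Mean of a vector in `ℝ^d`. -/
def mu {d : ℕ} (x : EuclideanSpace ℝ (Fin d)) : ℝ := (∑ i, x i) / d

/-- Variance `σ²` of a vector in `ℝ^d`. -/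
def sqVar {d : ℕ} (x : EuclideanSpace ℝ (Fin d)) : ℝ := (∑ i, (x i - mu x) ^ 2) / d

/-- Standard deviation `σ` of a vector in `ℝ^d`. -/
def sd {d : ℕ} (x : EuclideanSpace ℝ (Fin d)) : ℝ := Real.sqrt (sqVar x)

/-- The all-ones vector `𝟙 ∈ ℝ^d`. -/
def onesV {d : ℕ} : EuclideanSpace ℝ (Fin d) := WithLp.toLp 2 (fun _ => 1)

/-- LayerNorm with scale `γ`: `LN(x)_i = γ_i (x_i − μ(x))/σ(x)`. -/
def LN {d : ℕ} (γ : Fin d → ℝ) (x : EuclideanSpace ℝ (Fin d)) : EuclideanSpace ℝ (Fin d) :=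
  WithLp.toLp 2 (fun i => γ i * (x i - mu x) / sd x)

/-- `A = (1/σ(X)) diag(γ)(I − (1/d) 𝟙𝟙ᵀ)`. -/
def matA {d : ℕ} (γ : Fin d → ℝ) (X : EuclideanSpace ℝ (Fin d)) : Matrix (Fin d) (Fin d) ℝ :=
  (sd X)⁻¹ • (Matrix.diagonal γ * (1 - (d : ℝ)⁻¹ • Matrix.of (fun _ _ => (1 : ℝ))))

/-- `B = (1/(d σ(X)³)) diag(γ)(X − μ(X)𝟙)(X − μ(X)𝟙)ᵀ`. -/
def matB {d : ℕ} (γ : Fin d → ℝ) (X : EuclideanSpace ℝ (Fin d)) : Matrix (Fin d) (Fin d) ℝ :=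
  ((d : ℝ) * sd X ^ 3)⁻¹ •
    (Matrix.diagonal γ * Matrix.vecMulVec (fun i => X i - mu X) (fun j => X j - mu X))

/-- Matrix–vector multiplication on Euclidean spaces. -/
def mulVecE {m n : ℕ} (W : Matrix (Fin m) (Fin n) ℝ) (x : EuclideanSpace ℝ (Fin n)) :
    EuclideanSpace ℝ (Fin m) := WithLp.toLp 2 (fun i => ∑ j, W i j * x j)

/-! With `C = I − 𝟙𝟙ᵀ/d` the centring matrix, LayerNorm is `LN x = σ(x)⁻¹ • (diag γ · C) x`,
a linear map scaled by `σ⁻¹`, and `σ(x)² = ‖C x‖² / d`. Because `C` is the orthogonal projection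
onto `𝟙^⊥`, the derivative of `σ` at `X` is `δ ↦ ⟪C X, δ⟫ / (d σ(X))`. The product rule then gives
`σ(X)⁻¹ (diag γ · C) δ − ⟪C X, δ⟫ / (d σ(X)³) • (diag γ · C) X`, which is `(A − B) δ`
since `(diag γ · C) X = diag γ (X − μ(X)𝟙)`. -/

open Matrix

section LayerNormDerivative

variable {d : ℕ}

def centeringMatrix (d : ℕ) : Matrix (Fin d) (Fin d) ℝ :=
  1 - (d : ℝ)⁻¹ • Matrix.of (fun _ _ => (1 : ℝ))

lemma toEuclideanLin_centeringMatrix_apply (x : EuclideanSpace ℝ (Fin d)) (i : Fin d) :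
    toEuclideanLin (centeringMatrix d) x i = x i - mu x := by
  simp [centeringMatrix, mulVec, dotProduct, mu, div_eq_inv_mul, Finset.mul_sum]

lemma sum_sub_mu_eq_zero (x : EuclideanSpace ℝ (Fin d)) : ∑ i, (x i - mu x) = 0 := by
  rcases eq_or_ne d 0 with rfl | hd
  · simp
  · rw [Finset.sum_sub_distrib, Finset.sum_const, Finset.card_univ, Fintype.card_fin,
      nsmul_eq_mul, mu, mul_div_cancel₀ _ (Nat.cast_ne_zero.mpr hd), sub_self]

lemma inner_centered_centeringMatrix_apply (x y : EuclideanSpace ℝ (Fin d)) :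
    inner ℝ (toEuclideanLin (centeringMatrix d) x) (toEuclideanLin (centeringMatrix d) y) =
      inner ℝ (toEuclideanLin (centeringMatrix d) x) y := by
  simp only [PiLp.inner_apply, toEuclideanLin_centeringMatrix_apply, RCLike.inner_apply,
    conj_trivial]
  rw [Finset.sum_congr rfl fun i _ => sub_mul (y i) (mu y) _, Finset.sum_sub_distrib,
    ← Finset.mul_sum, sum_sub_mu_eq_zero, mul_zero, sub_zero]

lemma sqVar_eq_inv_mul_norm_sq (x : EuclideanSpace ℝ (Fin d)) :
    sqVar x = (d : ℝ)⁻¹ * ‖toEuclideanLin (centeringMatrix d) x‖ ^ 2 := by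
  simp [sqVar, EuclideanSpace.real_norm_sq_eq, toEuclideanLin_centeringMatrix_apply,
    div_eq_inv_mul]

lemma hasFDerivAt_sd {X : EuclideanSpace ℝ (Fin d)} (hX : 0 < sd X) :
    HasFDerivAt sd (((d : ℝ) * sd X)⁻¹ • innerSL ℝ (toEuclideanLin (centeringMatrix d) X)) X := by
  set C := (toEuclideanLin (centeringMatrix d)).toContinuousLinearMap
  have hvar : HasFDerivAt sqVar ((d : ℝ)⁻¹ • (2 • (innerSL ℝ (C X)).comp C)) X := by
    rw [show (sqVar : EuclideanSpace ℝ (Fin d) → ℝ) = fun x => (d : ℝ)⁻¹ * ‖C x‖ ^ 2 from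
      funext sqVar_eq_inv_mul_norm_sq]
    exact C.hasFDerivAt.norm_sq.const_mul _
  refine (hvar.sqrt (Real.sqrt_pos.mp hX).ne').congr_fderiv ?_
  ext y
  simp [C, inner_centered_centeringMatrix_apply, sd]
  ring

lemma toEuclideanLin_diagonal_mul_centeringMatrix_apply (γ : Fin d → ℝ)
    (x : EuclideanSpace ℝ (Fin d)) (i : Fin d) :
    toEuclideanLin (diagonal γ * centeringMatrix d) x i = γ i * (x i - mu x) := by
  rw [← toEuclideanLin_centeringMatrix_apply]
  simp [toLpLin_apply, -mulVec_mulVec, mulVec_diagonal]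

lemma LN_eq_inv_sd_smul (γ : Fin d → ℝ) (x : EuclideanSpace ℝ (Fin d)) :
    LN γ x = (sd x)⁻¹ • toEuclideanLin (diagonal γ * centeringMatrix d) x := by
  ext i
  simp only [LN, PiLp.smul_apply, toEuclideanLin_diagonal_mul_centeringMatrix_apply, smul_eq_mul]
  ring

lemma toEuclideanLin_matB_apply (γ : Fin d → ℝ) (X δ : EuclideanSpace ℝ (Fin d)) :
    toEuclideanLin (matB γ X) δ =
      (((d : ℝ) * sd X ^ 3)⁻¹ * inner ℝ (toEuclideanLin (centeringMatrix d) X) δ) •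
        toEuclideanLin (diagonal γ * centeringMatrix d) X := by
  have hinner :
      inner ℝ (toEuclideanLin (centeringMatrix d) X) δ = (fun j => X j - mu X) ⬝ᵥ δ := by
    simp [PiLp.inner_apply, toEuclideanLin_centeringMatrix_apply, dotProduct, mul_comm]
  ext i
  rw [PiLp.smul_apply, toEuclideanLin_diagonal_mul_centeringMatrix_apply, hinner]
  simp [matB, toLpLin_apply, vecMulVec_mulVec, mulVec_diagonal]
  ring

lemma matA_sub_matB_apply (γ : Fin d → ℝ) (X : EuclideanSpace ℝ (Fin d)) (i j : Fin d) :
    (matA γ X - matB γ X) i j =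
      γ i * (((if i = j then (1 : ℝ) else 0) - 1 / d) / sd X -
        (X i - mu X) * (X j - mu X) / (d * sd X ^ 3)) := by
  simp [matA, matB, one_apply, vecMulVec_apply]
  split_ifs <;> ring

theorem hasFDerivAt_LN (γ : Fin d → ℝ) {X : EuclideanSpace ℝ (Fin d)} (hX : 0 < sd X) :
    HasFDerivAt (LN γ) (toEuclideanLin (matA γ X - matB γ X)).toContinuousLinearMap X := by
  set M := (toEuclideanLin (diagonal γ * centeringMatrix d)).toContinuousLinearMap
  have hinv : HasFDerivAt (fun x => (sd x)⁻¹)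
      ((-(sd X ^ 2)⁻¹) •
        (((d : ℝ) * sd X)⁻¹ • innerSL ℝ (toEuclideanLin (centeringMatrix d) X))) X :=
    (hasDerivAt_inv hX.ne').comp_hasFDerivAt X (hasFDerivAt_sd hX)
  rw [show LN γ = fun x => (sd x)⁻¹ • M x from funext (LN_eq_inv_sd_smul γ)]
  refine (hinv.smul M.hasFDerivAt).congr_fderiv ?_
  ext1 δ
  have hA : matA γ X = (sd X)⁻¹ • (diagonal γ * centeringMatrix d) := rfl
  simp [M, hA, toEuclideanLin_matB_apply]
  module

end LayerNormDerivative

theorem layerNorm_hasFDerivAt_and_jacobian_entries_general (d : ℕ)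
    (X : EuclideanSpace ℝ (Fin d)) (hX : 0 < sd X) (γ : Fin d → ℝ) :
    HasFDerivAt (LN γ)
      ((Matrix.toEuclideanLin (matA γ X - matB γ X)).toContinuousLinearMap) X ∧
    ∀ i j : Fin d, (matA γ X - matB γ X) i j =
      γ i * (((if i = j then (1 : ℝ) else 0) - 1 / d) / sd X -
        (X i - mu X) * (X j - mu X) / (d * sd X ^ 3)) :=
  ⟨hasFDerivAt_LN γ hX, matA_sub_matB_apply γ X⟩

/-- LayerNorm is Fréchet differentiable at `X` (where `σ(X) > 0`) with
total derivative `δ ↦ (A − B)δ`, and the Jacobian entries are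
`(A − B)_{ij} = γ_i ((δ_{ij} − 1/d)/σ(X) − (X_i − μ(X))(X_j − μ(X))/(d σ(X)³))`. -/
theorem layerNorm_hasFDerivAt_and_jacobian_entries (d : ℕ) (hd : 1 ≤ d)
    (X : EuclideanSpace ℝ (Fin d)) (hX : 0 < sd X) (γ : Fin d → ℝ) :
    HasFDerivAt (LN γ)
      ((Matrix.toEuclideanLin (matA γ X - matB γ X)).toContinuousLinearMap) X ∧
    ∀ i j : Fin d, (matA γ X - matB γ X) i j =
      γ i * (((if i = j then (1 : ℝ) else 0) - 1 / d) / sd X -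
        (X i - mu X) * (X j - mu X) / (d * sd X ^ 3)) :=
  layerNorm_hasFDerivAt_and_jacobian_entries_general d X hX γ
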